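/- arXiv:2101.12739 — 3 statements merged into one kernel-verified Lean document; each statement's English description precedes it below -/
import Mathlib

section
/- For any nonempty finite sets A and B, there exists a (|B|/(4·|A|))-uniform map f : A → B. -/
/-!
Deal the elements of `A` out to `B` round-robin, `a ↦ (index of a) mod |B|`: every fibre then
has `q` or `q + 1` elements, where `q = ⌊|A| / |B|⌋`. On `{q, q + 1}` the deviation `|c - t|` from
the mean `t = |A| / |B|` is an affine function of `c`, so the total deviation is determined by
`∑ c = |A|`; it equals `2 |B| x (1 - x)` with `x = t - q`, which is at most `|B| / 2`.
-/

open BigOperators Finset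

/-- A map `f : A → B` between nonempty finite sets is `ε`-uniform if
`(1/2)·Σ_{b∈B} | |f⁻¹(b)|/|A| − 1/|B| | ≤ ε`. -/
def IsUniformMap {A B : Type*} [Fintype A] [Fintype B] [DecidableEq B]
    (f : A → B) (ε : ℝ) : Prop :=
  (1 / 2) * ∑ b : B,
      |((Finset.univ.filter (fun a => f a = b)).card : ℝ) / (Fintype.card A)
        - 1 / (Fintype.card B)| ≤ ε

theorem Fin.card_filter_val_mod_eq {n m v : ℕ} (hv : v < m) :
    #{i : Fin n | (i : ℕ) % m = v} = n / m + if v < n % m then 1 else 0 := by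
  have hcount : #{i : Fin n | (i : ℕ) % m = v} = Nat.count (· ≡ v [MOD m]) n := by
    rw [Nat.count_eq_card_filter_range, card_filter, card_filter,
      Fin.sum_univ_eq_sum_range (fun i => if i % m = v then 1 else 0)]
    simp only [Nat.ModEq, Nat.mod_eq_of_lt hv]
  rw [hcount, Nat.count_modEq_card n (v.zero_le.trans_lt hv), Nat.mod_eq_of_lt hv]

theorem exists_map_card_fiber_eq_div_or_eq_div_add_one {A B : Type*} [Fintype A] [Fintype B]
    [DecidableEq B] [Nonempty B] :
    ∃ f : A → B, ∀ b, #{a | f a = b} = Fintype.card A / Fintype.card B ∨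
      #{a | f a = b} = Fintype.card A / Fintype.card B + 1 := by
  have hB : 0 < Fintype.card B := Fintype.card_pos
  let e := Fintype.equivFin A
  let g := Fintype.equivFin B
  refine ⟨fun a => g.symm ⟨e a % Fintype.card B, Nat.mod_lt _ hB⟩, fun b => ?_⟩
  have hfiber : #{a | g.symm ⟨e a % Fintype.card B, Nat.mod_lt _ hB⟩ = b} =
      #{i : Fin (Fintype.card A) | (i : ℕ) % Fintype.card B = g b} := by
    refine card_equiv e fun a => ?_
    simp [Equiv.symm_apply_eq, Fin.ext_iff]
  rw [hfiber, Fin.card_filter_val_mod_eq (g b).isLt]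
  split_ifs <;> simp

theorem sum_abs_sub_le_of_forall_eq_or_eq_add_one {ι : Type*} [Fintype ι] {c : ι → ℝ} {q t : ℝ}
    (hc : ∀ i, c i = q ∨ c i = q + 1) (hqt : q ≤ t) (htq : t ≤ q + 1)
    (hsum : ∑ i, c i = Fintype.card ι * t) :
    ∑ i, |c i - t| ≤ Fintype.card ι / 2 := by
  have habs : ∀ i, |c i - t| = (t - q) + (c i - q) * (1 - 2 * (t - q)) := by
    intro i
    rcases hc i with h | h <;> rw [h]
    · rw [abs_of_nonpos (by linarith)]; ring
    · rw [abs_of_nonneg (by linarith)]; ring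
  have hcard : (0 : ℝ) ≤ Fintype.card ι := Nat.cast_nonneg _
  calc ∑ i, |c i - t| = Fintype.card ι * (2 * (t - q) * (1 - (t - q))) := by
        simp only [habs, sum_add_distrib, ← sum_mul, sum_sub_distrib, hsum, sum_const, card_univ,
          nsmul_eq_mul]
        ring
    _ ≤ Fintype.card ι / 2 := by nlinarith [mul_nonneg hcard (sq_nonneg (1 - 2 * (t - q)))]

theorem isUniformMap_of_sum_abs_sub_le {A B : Type*} [Fintype A] [Fintype B] [DecidableEq B]
    [Nonempty A] {f : A → B} {D : ℝ}
    (hD : ∑ b, |(#{a | f a = b} : ℝ) - Fintype.card A / Fintype.card B| ≤ D) :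
    IsUniformMap f (D / (2 * Fintype.card A)) := by
  have hA : (0 : ℝ) < Fintype.card A := Nat.cast_pos.mpr Fintype.card_pos
  have hterm : ∀ c : ℝ, |c / Fintype.card A - 1 / Fintype.card B| =
      |c - Fintype.card A / Fintype.card B| / Fintype.card A := fun c => by
    rw [← abs_of_pos hA, ← abs_div, abs_of_pos hA]
    congr 1
    field_simp
  unfold IsUniformMap
  calc (1 / 2) * ∑ b, |(#{a | f a = b} : ℝ) / Fintype.card A - 1 / Fintype.card B|
      = (1 / 2) * ((∑ b, |(#{a | f a = b} : ℝ) - Fintype.card A / Fintype.card B|) /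
          Fintype.card A) := by
        simp only [hterm, sum_div]
    _ ≤ (1 / 2) * (D / Fintype.card A) := by gcongr
    _ = D / (2 * Fintype.card A) := by ring

theorem exists_uniform_map
    {A B : Type*} [Fintype A] [Fintype B] [DecidableEq B]
    [Nonempty A] [Nonempty B] :
    ∃ f : A → B, IsUniformMap f ((Fintype.card B : ℝ) / (4 * (Fintype.card A : ℝ))) := by
  obtain ⟨f, hf⟩ := exists_map_card_fiber_eq_div_or_eq_div_add_one (A := A) (B := B)
  set n := Fintype.card A
  set m := Fintype.card B
  have hm : (0 : ℝ) < m := Nat.cast_pos.mpr Fintype.card_pos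
  have hsum : ∑ b, (#{a | f a = b} : ℝ) = m * (n / m) := by
    rw [mul_div_cancel₀ _ hm.ne', ← Nat.cast_sum, ← card_eq_sum_card_fiberwise (by simp)]
    rfl
  have hdiv_le : (n / m : ℝ) ≤ (n / m : ℕ) + 1 := by
    simpa only [Nat.floor_div_eq_div] using (Nat.lt_floor_add_one ((n : ℝ) / m)).le
  have hdev := sum_abs_sub_le_of_forall_eq_or_eq_add_one (fun b => by exact_mod_cast hf b)
    Nat.cast_div_le hdiv_le hsum
  refine ⟨f, ?_⟩
  convert isUniformMap_of_sum_abs_sub_le hdev using 1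
  ring
end

section
/- Let M, N be positive integers and let f : {0,…,M−1} → {0,…,N−1} be the map f(x) = x mod N. Set r = M/N (a positive real). Then (1/2)·Σ_{b=0}^{N−1} | |f⁻¹(b)|/M − 1/N | = 1 − r + 2⌊r⌋ − ⌊r⌋/r − ⌊r⌋²/r, and consequently this quantity is at most N/(4M); in particular f is an (N/(4M))-uniform map. -/
open BigOperators Finset

/-! Writing `M = qN + s` with `0 ≤ s < N`, exactly `s` fibres of `x ↦ x % N` have `q + 1` points
and the other `N - s` have `q`, so `|N · #fibre - M|` is `N - s` resp. `s`. The half-sum is then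
`s (N - s) / (M N) = {r} (1 - {r}) / r`, and `{r} (1 - {r}) ≤ 1/4`. -/

theorem Fin.card_filter_val_eq_count {M : ℕ} (p : ℕ → Prop) [DecidablePred p] :
    #{x : Fin M | p x} = Nat.count p M := by
  rw [Nat.count_eq_card_filter_range, ← Nat.Iio_eq_range, ← Fin.map_valEmbedding_univ, filter_map,
    card_map]
  rfl

theorem Fin.sum_ite_val_lt {α : Type*} [AddCommMonoid α] {N s : ℕ} (hs : s ≤ N) (x y : α) :
    ∑ b : Fin N, (if (b : ℕ) < s then x else y) = s • x + (N - s) • y := by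
  rw [sum_ite, Finset.sum_const, Finset.sum_const, filter_not,
    card_sdiff_of_subset (filter_subset _ _), Fin.card_filter_val_lt, card_univ, Fintype.card_fin,
    min_eq_right hs]

theorem card_fiber_of_val_eq_mod {M N : ℕ} (hN : 0 < N) (f : Fin M → Fin N)
    (hf : ∀ x : Fin M, (f x : ℕ) = (x : ℕ) % N) (b : Fin N) :
    #{x | f x = b} = M / N + if (b : ℕ) < M % N then 1 else 0 := by
  have hfiber (x : Fin M) : f x = b ↔ (x : ℕ) ≡ b [MOD N] := by
    rw [Fin.ext_iff, hf, Nat.ModEq, Nat.mod_eq_of_lt b.isLt]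
  simp_rw [hfiber]
  rw [Fin.card_filter_val_eq_count (· ≡ b [MOD N]), Nat.count_modEq_card M hN,
    Nat.mod_eq_of_lt b.isLt]

theorem sum_abs_card_fiber_div_sub {M N : ℕ} (hM : 0 < M) (hN : 0 < N) (f : Fin M → Fin N)
    (hf : ∀ x : Fin M, (f x : ℕ) = (x : ℕ) % N) :
    ∑ b : Fin N, |(#{x | f x = b} : ℝ) / M - 1 / N|
      = 2 * (M % N : ℕ) * (N - (M % N : ℕ)) / (M * N) := by
  set s := M % N
  have hsN : s < N := Nat.mod_lt M hN
  have hsNR : (s : ℝ) ≤ N := by exact_mod_cast hsN.le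
  have hMR : (M : ℝ) = (M / N : ℕ) * N + s := by exact_mod_cast (Nat.div_add_mod' M N).symm
  have hterm (b : Fin N) : |(#{x | f x = b} : ℝ) / M - 1 / N|
      = if (b : ℕ) < s then (N - s : ℝ) / (M * N) else s / (M * N) := by
    rw [card_fiber_of_val_eq_mod hN f hf b, div_sub_div _ _ (by positivity) (by positivity),
      abs_div, abs_of_pos (by positivity : (0 : ℝ) < M * N)]
    push_cast
    rw [hMR]
    split_ifs
    · rw [abs_of_nonneg (by linarith)]
      ring
    · rw [abs_of_nonpos (by linarith)]
      ring
  rw [sum_congr rfl fun b _ => hterm b, Fin.sum_ite_val_lt hsN.le, nsmul_eq_mul, nsmul_eq_mul,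
    Nat.cast_sub hsN.le]
  ring

theorem half_sum_abs_card_fiber_div_sub {M N : ℕ} (hM : 0 < M) (hN : 0 < N) (f : Fin M → Fin N)
    (hf : ∀ x : Fin M, (f x : ℕ) = (x : ℕ) % N) :
    1 / 2 * ∑ b : Fin N, |(#{x | f x = b} : ℝ) / M - 1 / N|
      = Int.fract ((M : ℝ) / N) * (1 - Int.fract ((M : ℝ) / N)) / (M / N) := by
  rw [sum_abs_card_fiber_div_sub hM hN f hf, Int.fract_div_natCast_eq_div_natCast_mod]
  field_simp

theorem fract_mul_one_sub_fract_div {K : Type*} [Field K] [LinearOrder K] [IsStrictOrderedRing K]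
    [FloorRing K] {r : K} (hr : r ≠ 0) :
    Int.fract r * (1 - Int.fract r) / r
      = 1 - r + 2 * (⌊r⌋ : K) - (⌊r⌋ : K) / r - (⌊r⌋ : K) ^ 2 / r := by
  rw [Int.fract]
  field_simp
  ring

theorem fract_mul_one_sub_fract_le {K : Type*} [Field K] [LinearOrder K] [IsStrictOrderedRing K]
    [FloorRing K] (r : K) : Int.fract r * (1 - Int.fract r) ≤ 1 / 4 := by
  have := four_mul_le_sq_add (Int.fract r) (1 - Int.fract r)
  linarith

theorem mod_map_is_uniform (M N : ℕ) (hM : 0 < M) (hN : 0 < N)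
    (f : Fin M → Fin N) (hf : ∀ x : Fin M, (f x : ℕ) = (x : ℕ) % N)
    (r : ℝ) (hr : r = (M : ℝ) / (N : ℝ)) :
    ((1 / 2) * ∑ b : Fin N,
        |((Finset.univ.filter (fun x : Fin M => f x = b)).card : ℝ) / (M : ℝ)
          - 1 / (N : ℝ)|
      = 1 - r + 2 * (⌊r⌋ : ℝ) - (⌊r⌋ : ℝ) / r - (⌊r⌋ : ℝ) ^ 2 / r)
    ∧ (1 - r + 2 * (⌊r⌋ : ℝ) - (⌊r⌋ : ℝ) / r - (⌊r⌋ : ℝ) ^ 2 / r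
        ≤ (N : ℝ) / (4 * (M : ℝ)))
    ∧ IsUniformMap f ((N : ℝ) / (4 * (M : ℝ))) := by
  have hr0 : 0 < r := hr ▸ by positivity
  have hdeviation := half_sum_abs_card_fiber_div_sub hM hN f hf
  rw [← hr, fract_mul_one_sub_fract_div hr0.ne'] at hdeviation
  have hbound : 1 - r + 2 * (⌊r⌋ : ℝ) - (⌊r⌋ : ℝ) / r - (⌊r⌋ : ℝ) ^ 2 / r
      ≤ (N : ℝ) / (4 * (M : ℝ)) :=
    calc _ = Int.fract r * (1 - Int.fract r) / r := (fract_mul_one_sub_fract_div hr0.ne').symm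
      _ ≤ 1 / 4 / r := by gcongr; exact fract_mul_one_sub_fract_le r
      _ = N / (4 * M) := by rw [hr]; field_simp
  refine ⟨hdeviation, hbound, ?_⟩
  rw [IsUniformMap, Fintype.card_fin, Fintype.card_fin, hdeviation]
  exact hbound
end

section
/- Let n ≥ 1 and S = {0,1}^n, let η ≥ 0 be real, and let g : S × S → ℝ satisfy 0 ≤ g(y,x) ≤ 1 for all y, x and, for every y ∈ S, (1/2)·g(y,y) + (1/2)·(1/(2^n − 1))·Σ_{x∈S, x≠y} (1 − g(y,x)) ≥ 1 − η. Let {h_r}_{r∈R} be a pairwise independent permutation family on S. Then for every p ∈ S, (1/|R|)·Σ_{r∈R} g(h_r(p), h_r(p)) ≥ 1 − 2η, and for every pair of distinct p, p' ∈ S, (1/|R|)·Σ_{r∈R} (1 − g(h_r(p), h_r(p'))) ≥ 1 − 2η. -/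
open BigOperators Finset

/-- A family `h : R → Equiv.Perm S` of permutations of a finite set `S` (with `|S| ≥ 2`),
indexed by a nonempty finite set `R`, is pairwise independent if for all distinct
`x0, x1` and distinct `y0, y1`, the number of `r` with `h r x0 = y0` and `h r x1 = y1`
equals `|R| / (|S|·(|S|−1))`. -/
def PairwiseIndepPermFamily {R S : Type*} [Fintype R] [Fintype S] [DecidableEq S]
    (h : R → Equiv.Perm S) : Prop :=
  ∀ x0 x1 y0 y1 : S, x0 ≠ x1 → y0 ≠ y1 →
    ((Finset.univ.filter (fun r : R => h r x0 = y0 ∧ h r x1 = y1)).card : ℝ)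
      = (Fintype.card R : ℝ) / ((Fintype.card S : ℝ) * ((Fintype.card S : ℝ) - 1))

theorem mix_scheme_correctness (n : ℕ) (hn : 1 ≤ n) (η : ℝ) (hη : 0 ≤ η)
    (g : (Fin n → Bool) → (Fin n → Bool) → ℝ)
    (hg0 : ∀ y x, 0 ≤ g y x) (hg1 : ∀ y x, g y x ≤ 1)
    (hcorrect : ∀ y : Fin n → Bool,
      (1 / 2) * g y y
        + (1 / 2) * (1 / ((2 : ℝ) ^ n - 1))
            * ∑ x ∈ Finset.univ \ {y}, (1 - g y x) ≥ 1 - η)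
    {R : Type*} [Fintype R] [Nonempty R]
    (h : R → Equiv.Perm (Fin n → Bool)) (hpair : PairwiseIndepPermFamily h) :
    (∀ p : Fin n → Bool,
        (1 / (Fintype.card R : ℝ)) * ∑ r : R, g (h r p) (h r p) ≥ 1 - 2 * η)
    ∧ (∀ p p' : Fin n → Bool, p ≠ p' →
        (1 / (Fintype.card R : ℝ)) * ∑ r : R, (1 - g (h r p) (h r p'))
          ≥ 1 - 2 * η) := by
  classical
  have hcardS : (Fintype.card (Fin n → Bool) : ℝ) = 2 ^ n := by
    simp [Fintype.card_fun]
  have h2n : (2 : ℝ) ≤ 2 ^ n := by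
    calc (2:ℝ) = 2 ^ 1 := (pow_one 2).symm
    _ ≤ 2 ^ n := pow_le_pow_right₀ (by norm_num) hn
  have hD : (0:ℝ) < (2:ℝ) ^ n - 1 := by linarith
  have hRpos : (0:ℝ) < (Fintype.card R : ℝ) := by
    exact_mod_cast Fintype.card_pos
  have hcardsdiff : ∀ y : Fin n → Bool, ((Finset.univ \ {y}).card : ℝ) = 2 ^ n - 1 := by
    intro y
    rw [Finset.sdiff_singleton_eq_erase, Finset.card_erase_of_mem (Finset.mem_univ y)]
    rw [Finset.card_univ]
    have h1 : 1 ≤ Fintype.card (Fin n → Bool) := Fintype.card_pos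
    push_cast [Nat.cast_sub h1]
    rw [hcardS]
  have hsum_ub : ∀ y : Fin n → Bool,
      ∑ x ∈ Finset.univ \ {y}, (1 - g y x) ≤ 2 ^ n - 1 := by
    intro y
    calc ∑ x ∈ Finset.univ \ {y}, (1 - g y x)
        ≤ ∑ x ∈ Finset.univ \ {y}, 1 := by
          apply Finset.sum_le_sum
          intro x _
          linarith [hg0 y x]
      _ = 2 ^ n - 1 := by rw [Finset.sum_const, nsmul_eq_mul, mul_one, hcardsdiff]
  -- Key lemma A : g y y ≥ 1 - 2η
  have keyA : ∀ y : Fin n → Bool, 1 - 2 * η ≤ g y y := by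
    intro y
    have hc := hcorrect y
    have h1 : (1 / ((2:ℝ) ^ n - 1)) * ∑ x ∈ Finset.univ \ {y}, (1 - g y x) ≤ 1 := by
      rw [one_div, inv_mul_le_iff₀ hD]
      linarith [hsum_ub y]
    linarith
  -- Key lemma B : off-point sum ≥ (2^n - 1)(1 - 2η)
  have keyB : ∀ y : Fin n → Bool, ((2:ℝ)^n - 1) * (1 - 2 * η)
      ≤ ∑ x ∈ Finset.univ \ {y}, (1 - g y x) := by
    intro y
    have hc := hcorrect y
    have hgy := hg1 y y
    have h1 : (1 - 2 * η) ≤ (1 / ((2:ℝ) ^ n - 1)) * ∑ x ∈ Finset.univ \ {y}, (1 - g y x) := by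
      linarith
    calc ((2:ℝ)^n - 1) * (1 - 2 * η)
        ≤ ((2:ℝ)^n - 1) * ((1 / ((2:ℝ) ^ n - 1)) * ∑ x ∈ Finset.univ \ {y}, (1 - g y x)) :=
          mul_le_mul_of_nonneg_left h1 (le_of_lt hD)
      _ = ∑ x ∈ Finset.univ \ {y}, (1 - g y x) := by
          field_simp
  constructor
  · intro p
    have hsum : (Fintype.card R : ℝ) * (1 - 2 * η) ≤ ∑ r : R, g (h r p) (h r p) := by
      calc (Fintype.card R : ℝ) * (1 - 2 * η)
          = ∑ _r : R, (1 - 2 * η) := by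
            rw [Finset.sum_const, nsmul_eq_mul, Finset.card_univ]
        _ ≤ ∑ r : R, g (h r p) (h r p) :=
            Finset.sum_le_sum fun r _ => keyA (h r p)
    rw [ge_iff_le, one_div, inv_mul_eq_div, le_div_iff₀ hRpos]
    linarith
  · intro p p' hpp'
    have hfiber : ∑ r : R, (1 - g (h r p) (h r p'))
        = ∑ q : (Fin n → Bool) × (Fin n → Bool), ∑ r ∈ Finset.univ.filter
            (fun r : R => (h r p, h r p') = q), (1 - g q.1 q.2) := by
      rw [← Finset.sum_fiberwise Finset.univ (fun r : R => (h r p, h r p'))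
        (fun r => (1 - g (h r p) (h r p')))]
      apply Finset.sum_congr rfl
      intro q _
      apply Finset.sum_congr rfl
      intro r hr
      rw [Finset.mem_filter] at hr
      rw [← hr.2]
    have hfiber_card : ∀ q : (Fin n → Bool) × (Fin n → Bool),
        (∑ r ∈ Finset.univ.filter (fun r : R => (h r p, h r p') = q), (1 - g q.1 q.2))
        = ((Finset.univ.filter (fun r : R => h r p = q.1 ∧ h r p' = q.2)).card : ℝ)
            * (1 - g q.1 q.2) := by
      intro q
      rw [Finset.sum_const, nsmul_eq_mul]
      have heq : Finset.univ.filter (fun r : R => (h r p, h r p') = q)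
          = Finset.univ.filter (fun r : R => h r p = q.1 ∧ h r p' = q.2) := by
        apply Finset.filter_congr
        intro r _
        constructor
        · intro hq; rw [← hq]; exact ⟨rfl, rfl⟩
        · rintro ⟨h1, h2⟩; exact Prod.ext h1 h2
      rw [heq]
    have hdiag : ∀ y : Fin n → Bool,
        ((Finset.univ.filter (fun r : R => h r p = y ∧ h r p' = y)).card : ℝ) = 0 := by
      intro y
      norm_cast
      rw [Finset.card_eq_zero, Finset.filter_eq_empty_iff]
      intro r _
      rintro ⟨h1, h2⟩
      exact hpp' ((h r).injective (h1.trans h2.symm))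
    have hoff : ∀ y0 y1 : Fin n → Bool, y1 ≠ y0 →
        ((Finset.univ.filter (fun r : R => h r p = y0 ∧ h r p' = y1)).card : ℝ)
          = (Fintype.card R : ℝ) / ((2:ℝ)^n * ((2:ℝ)^n - 1)) := by
      intro y0 y1 hne
      rw [hpair p p' y0 y1 hpp' (Ne.symm hne), hcardS]
    have hmain : ∑ r : R, (1 - g (h r p) (h r p'))
        = ((Fintype.card R : ℝ) / ((2:ℝ)^n * ((2:ℝ)^n - 1)))
            * ∑ y0 : Fin n → Bool, ∑ y1 ∈ Finset.univ \ {y0}, (1 - g y0 y1) := by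
      rw [hfiber]
      rw [Fintype.sum_prod_type]
      rw [Finset.mul_sum]
      apply Finset.sum_congr rfl
      intro y0 _
      rw [Finset.mul_sum]
      rw [← Finset.sum_sdiff (Finset.subset_univ {y0})]
      have hzero : ∑ y1 ∈ ({y0} : Finset (Fin n → Bool)),
          ∑ r ∈ Finset.univ.filter (fun r : R => (h r p, h r p') = (y0, y1)),
            (1 - g (y0, y1).1 (y0, y1).2) = 0 := by
        rw [Finset.sum_singleton]
        rw [hfiber_card (y0, y0)]
        rw [hdiag y0]
        ring
      rw [hzero, add_zero]
      apply Finset.sum_congr rfl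
      intro y1 hy1
      rw [Finset.mem_sdiff, Finset.mem_singleton] at hy1
      rw [hfiber_card (y0, y1), hoff y0 y1 hy1.2]
    have hcoef : (0:ℝ) ≤ (Fintype.card R : ℝ) / ((2:ℝ)^n * ((2:ℝ)^n - 1)) := by
      apply div_nonneg (le_of_lt hRpos)
      positivity
    have hsum_lb : (2:ℝ)^n * (((2:ℝ)^n - 1) * (1 - 2 * η))
        ≤ ∑ y0 : Fin n → Bool, ∑ y1 ∈ Finset.univ \ {y0}, (1 - g y0 y1) := by
      calc (2:ℝ)^n * (((2:ℝ)^n - 1) * (1 - 2 * η))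
          = ∑ _y0 : Fin n → Bool, (((2:ℝ)^n - 1) * (1 - 2 * η)) := by
            rw [Finset.sum_const, nsmul_eq_mul, Finset.card_univ, hcardS]
        _ ≤ _ := Finset.sum_le_sum fun y0 _ => keyB y0
    have hfinal : (Fintype.card R : ℝ) * (1 - 2 * η)
        ≤ ∑ r : R, (1 - g (h r p) (h r p')) := by
      rw [hmain]
      have hmm := mul_le_mul_of_nonneg_left hsum_lb hcoef
      calc (Fintype.card R : ℝ) * (1 - 2 * η)
          = ((Fintype.card R : ℝ) / ((2:ℝ)^n * ((2:ℝ)^n - 1)))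
              * ((2:ℝ)^n * (((2:ℝ)^n - 1) * (1 - 2 * η))) := by
            field_simp
        _ ≤ _ := hmm
    rw [ge_iff_le, one_div, inv_mul_eq_div, le_div_iff₀ hRpos]
    linarith
end
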